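/- Pruning soundness for Hall sets: let K ⊆ {1,...,n} be a Hall set for alldifferent (i.e. |K| = |I_K| where I_K = [min ⋃_{i∈K}D_i, max ⋃_{i∈K}D_i]). Then in every solution of alldifferent, the values {d_i : i ∈ K} are exactly the elements of I_K, and hence d_j ∉ I_K for all j ∉ K. -/

import Mathlib

/-!
A solution maps `K` injectively into `I_K`, a set of the same size, so it maps `K` onto `I_K`;
injectivity then leaves no value of `I_K` for a variable outside `K`.
-/

/-- The interval `I_K = [min ⋃_{i∈K} D i, max ⋃_{i∈K} D i]` of a nonempty set
of variables `K`. -/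
noncomputable def IntervalOf {n : ℕ} (D : Fin n → Finset ℤ) (hne : ∀ i, (D i).Nonempty)
    (K : Finset (Fin n)) (hK : K.Nonempty) : Finset ℤ :=
  have h : (K.biUnion D).Nonempty :=
    hK.elim fun i hi => (hne i).elim fun v hv =>
      ⟨v, Finset.mem_biUnion.mpr ⟨i, hi, hv⟩⟩
  Finset.Icc ((K.biUnion D).min' h) ((K.biUnion D).max' h)

open Finset

theorem Finset.image_eq_of_subset_of_card_eq {α β : Type*} [DecidableEq β] {f : α → β}
    (hf : Function.Injective f) {s : Finset α} {t : Finset β} (hst : s.image f ⊆ t)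
    (hcard : s.card = t.card) : s.image f = t :=
  eq_of_subset_of_card_le hst (by rw [card_image_of_injective _ hf, hcard])

theorem biUnion_subset_intervalOf {n : ℕ} (D : Fin n → Finset ℤ) (hne : ∀ i, (D i).Nonempty)
    (K : Finset (Fin n)) (hK : K.Nonempty) : K.biUnion D ⊆ IntervalOf D hne K hK :=
  fun _ hv => mem_Icc.mpr ⟨min'_le _ _ hv, le_max' _ _ hv⟩

/-- Pruning soundness for Hall sets: if `K` is a Hall set (`|K| = |I_K|`),
then in every solution of `alldifferent`, the values taken by the variables of
`K` are exactly the elements of `I_K`, and hence every variable outside `K`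
takes a value outside `I_K`. -/
theorem hall_set_pruning {n : ℕ} (D : Fin n → Finset ℤ)
    (hne : ∀ i, (D i).Nonempty) (K : Finset (Fin n)) (hK : K.Nonempty)
    (hHall : K.card = (IntervalOf D hne K hK).card)
    (d : Fin n → ℤ) (hd : ∀ i, d i ∈ D i) (hinj : Function.Injective d) :
    K.image d = IntervalOf D hne K hK ∧
    ∀ j : Fin n, j ∉ K → d j ∉ IntervalOf D hne K hK := by
  have hsub : K.image d ⊆ IntervalOf D hne K hK := image_subset_iff.mpr fun i hi =>
    biUnion_subset_intervalOf D hne K hK (mem_biUnion.mpr ⟨i, hi, hd i⟩)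
  have heq := image_eq_of_subset_of_card_eq hinj hsub hHall
  refine ⟨heq, fun j hj hmem => hj ?_⟩
  rwa [← heq, hinj.mem_finset_image] at hmem
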